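/- For integers k ≥ 1 and n ≥ 1, let χ_n be the characteristic function of the interval u_1^{k−1}(v_n([0,1))) (where u_1^{k−1} denotes the (k−1)-fold iterate of u_1, with u_1^0 = id). Then the total variation of Lᵏ χ_n on [0,1) satisfies Var(Lᵏ χ_n) ≥ 4 a_n n⁴ (|J|/N)^{k−1}, while Var(χ_n) ≤ 2 and sup|χ_n| ≤ 1. -/

import Mathlib

open MeasureTheory Set Filter

noncomputable section

namespace Gouezel

/-- `b a n = 4 * ∑_{k=1}^n a_k` (left endpoints of the intervals `I_n`). -/
def b (a : ℕ → ℝ) (n : ℕ) : ℝ := 4 * ∑ k ∈ Finset.range n, a (k + 1)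

/-- `b_∞ = 4 * ∑_{n=1}^∞ a_n`. -/
def binf (a : ℕ → ℝ) : ℝ := 4 * ∑' n : ℕ, a (n + 1)

/-- The length `|J| = 1 - b_∞` of the interval `J = [b_∞, 1)`. -/
def lenJ (a : ℕ → ℝ) : ℝ := 1 - binf a

/-- `v_n'(x) = a_n (1 + 2 cos²(2π n⁴ x))`. -/
def vd (a : ℕ → ℝ) (n : ℕ) (x : ℝ) : ℝ :=
  a n * (1 + 2 * Real.cos (2 * Real.pi * (n : ℝ) ^ 4 * x) ^ 2)

/-- `w_n'(x) = a_n (1 + 2 sin²(2π n⁴ x))`. -/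
def wd (a : ℕ → ℝ) (n : ℕ) (x : ℝ) : ℝ :=
  a n * (1 + 2 * Real.sin (2 * Real.pi * (n : ℝ) ^ 4 * x) ^ 2)

/-- The inverse branch `v_n(x) = b_{n-1} + ∫_0^x v_n'(t) dt`. -/
def v (a : ℕ → ℝ) (n : ℕ) (x : ℝ) : ℝ := b a (n - 1) + ∫ t in (0:ℝ)..x, vd a n t

/-- The inverse branch `w_n(x) = b_{n-1} + 2 a_n + ∫_0^x w_n'(t) dt`. -/
def w (a : ℕ → ℝ) (n : ℕ) (x : ℝ) : ℝ :=
  b a (n - 1) + 2 * a n + ∫ t in (0:ℝ)..x, wd a n t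

/-- The affine inverse branches `u_j(x) = b_∞ + (j-1)|J|/N + (|J|/N) x`, `1 ≤ j ≤ N`. -/
def u (a : ℕ → ℝ) (N : ℕ) (j : ℕ) (x : ℝ) : ℝ :=
  binf a + ((j : ℝ) - 1) * (lenJ a / N) + (lenJ a / N) * x

/-- The transfer operator on complex-valued functions. -/
def L (a : ℕ → ℝ) (N : ℕ) (f : ℝ → ℂ) (x : ℝ) : ℂ :=
  (∑' n : ℕ, ((vd a (n + 1) x : ℂ) * f (v a (n + 1) x)
      + (wd a (n + 1) x : ℂ) * f (w a (n + 1) x)))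
    + ((lenJ a / (N : ℝ) : ℝ) : ℂ) * ∑ j ∈ Finset.range N, f (u a N (j + 1) x)

/-- The transfer operator on real-valued functions. -/
def LR (a : ℕ → ℝ) (N : ℕ) (f : ℝ → ℝ) (x : ℝ) : ℝ :=
  (∑' n : ℕ, (vd a (n + 1) x * f (v a (n + 1) x) + wd a (n + 1) x * f (w a (n + 1) x)))
    + (lenJ a / N) * ∑ j ∈ Finset.range N, f (u a N (j + 1) x)

/-- The part `L_n` of the transfer operator coming from the branches `v_n, w_n`. -/
def Ln (a : ℕ → ℝ) (n : ℕ) (f : ℝ → ℂ) (x : ℝ) : ℂ :=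
  (vd a n x : ℂ) * f (v a n x) + (wd a n x : ℂ) * f (w a n x)

/-- Sup norm of `f` on `[0,1)`. -/
def supNorm (f : ℝ → ℂ) : ℝ := ⨆ x : Ico (0:ℝ) 1, ‖f x.1‖

/-- Best Lipschitz constant of `f` on `[0,1)` (the term at `x = y` is `0/0 = 0`). -/
def lipConst (f : ℝ → ℂ) : ℝ :=
  ⨆ p : Ico (0:ℝ) 1 × Ico (0:ℝ) 1, ‖f p.1.1 - f p.2.1‖ / |p.1.1 - p.2.1|

/-- Lipschitz norm `‖f‖_Lip = sup|f| + Lip(f)` on `[0,1)`. -/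
def lipNorm (f : ℝ → ℂ) : ℝ := supNorm f + lipConst f

/-- `f` is bounded and Lipschitz on `[0,1)`. -/
def BddLip (f : ℝ → ℂ) : Prop :=
  ∃ K : ℝ, (∀ x ∈ Ico (0:ℝ) 1, ‖f x‖ ≤ K) ∧
    ∀ x ∈ Ico (0:ℝ) 1, ∀ y ∈ Ico (0:ℝ) 1, ‖f x - f y‖ ≤ K * |x - y|

/-- The specific choice `a_n = 1/(100 n³)`. -/
def aa (n : ℕ) : ℝ := 1 / (100 * (n : ℝ) ^ 3)

/-- Standing hypotheses on the sequence `(a_n)`: positivity and `∑ a_n < 1/4`. -/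
def StdHyp (a : ℕ → ℝ) : Prop :=
  (∀ n : ℕ, 1 ≤ n → 0 < a n) ∧ Summable (fun n : ℕ => a (n + 1)) ∧
    (∑' n : ℕ, a (n + 1)) < 1 / 4

/-- `T : [0,1) → [0,1)` has the maps `v_n, w_n` (`n ≥ 1`) and `u_j` (`1 ≤ j ≤ N`)
as inverse branches. -/
def InverseBranches (a : ℕ → ℝ) (N : ℕ) (T : ℝ → ℝ) : Prop :=
  MapsTo T (Ico (0:ℝ) 1) (Ico (0:ℝ) 1) ∧
    ∀ x ∈ Ico (0:ℝ) 1,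
      (∀ n : ℕ, 1 ≤ n → T (v a n x) = x ∧ T (w a n x) = x) ∧
      (∀ j : ℕ, 1 ≤ j → j ≤ N → T (u a N j x) = x)

end Gouezel

/-!
Integrating `1 + 2cos²(2πn⁴t) = 2 + cos(4πn⁴t)` over `[0,1)` gives `2`, so the branches
`v_n`, `w_n` map `[0,1)` into the consecutive intervals `[b_{n-1}, b_{n-1} + 2a_n)` and
`[b_{n-1} + 2a_n, b_n)`, all below `b_∞`, while `u_1` maps `[0,1)` affinely onto
`[b_∞, b_∞ + |J|/N)` and the other `u_j` land above it. Hence on `[0,1)` only one branch sees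
each indicator: `L 1_{u_1(S)} = (|J|/N) 1_S` and `L 1_{v_n([0,1))} = v_n'`, so
`Lᵏ χ_n = (|J|/N)^{k-1} v_n'`. On the grid `i/(4n⁴)` the derivative `v_n' = a_n (2 + cos(4πn⁴x))`
alternates between `3a_n` and `a_n`, which gives variation at least `2a_n (4n⁴ - 1) ≥ 4a_n n⁴`.
Finally `χ_n` is the indicator of an interval, the image of `[0,1)` under a continuous map, so
its variation is at most `2`.
-/

open Real

theorem eVariationOn_le_of_monotoneOn_of_mapsTo {α : Type*} [LinearOrder α] {f : α → ℝ}
    {s : Set α} {m M : ℝ} (hf : MonotoneOn f s) (hfs : MapsTo f s (Icc m M)) :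
    eVariationOn f s ≤ ENNReal.ofReal (M - m) := by
  calc eVariationOn f s = eVariationOn (id ∘ f) s := rfl
    _ ≤ eVariationOn id (Icc m M) :=
      eVariationOn.comp_le_of_monotoneOn id f hf hfs
    _ = ENNReal.ofReal (M - m) := by simp

theorem eVariationOn_le_of_antitoneOn_of_mapsTo {α : Type*} [LinearOrder α] {f : α → ℝ}
    {s : Set α} {m M : ℝ} (hf : AntitoneOn f s) (hfs : MapsTo f s (Icc m M)) :
    eVariationOn f s ≤ ENNReal.ofReal (M - m) := by
  calc eVariationOn f s = eVariationOn (id ∘ f) s := rfl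
    _ ≤ eVariationOn id (Icc m M) :=
      eVariationOn.comp_le_of_antitoneOn id f hf hfs
    _ = ENNReal.ofReal (M - m) := by simp

theorem indicator_one_mem_Icc {α : Type*} (s : Set α) (x : α) :
    s.indicator (fun _ => (1 : ℝ)) x ∈ Icc 0 1 := by
  by_cases hx : x ∈ s <;> simp [hx]

theorem IsUpperSet.monotone_indicator_one {α : Type*} [Preorder α] {s : Set α}
    (hs : IsUpperSet s) : Monotone (s.indicator (1 : α → ℝ)) := by
  intro x y hxy
  by_cases hx : x ∈ s
  · simp [hx, hs hxy hx]
  · simp only [indicator_of_notMem hx]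
    exact (indicator_one_mem_Icc s y).1

theorem IsLowerSet.antitone_indicator_one {α : Type*} [Preorder α] {s : Set α}
    (hs : IsLowerSet s) : Antitone (s.indicator (1 : α → ℝ)) := by
  intro x y hxy
  by_cases hy : y ∈ s
  · simp [hy, hs hxy hy]
  · simp only [indicator_of_notMem hy]
    exact (indicator_one_mem_Icc s x).1

theorem Set.OrdConnected.eVariationOn_indicator_one_le_two {α : Type*} [LinearOrder α]
    {s : Set α} (hs : s.OrdConnected) (t : Set α) :
    eVariationOn (s.indicator fun _ => (1 : ℝ)) t ≤ 2 := by
  have hnorm (r : Set α) (x : α) : ‖r.indicator (1 : α → ℝ) x‖ₑ ≤ 1 := by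
    by_cases hx : x ∈ r <;> simp [hx]
  have hmaps (r : Set α) : MapsTo (r.indicator (1 : α → ℝ)) t (Icc 0 1) :=
    fun x _ => indicator_one_mem_Icc r x
  change eVariationOn (s.indicator 1) t ≤ 2
  -- `1_s = 1_{lowerClosure s} * 1_{upperClosure s}`: an antitone times a monotone indicator
  rw [← hs.upperClosure_inter_lowerClosure, inter_indicator_one]
  calc _ ≤ 1 * eVariationOn ((lowerClosure s : Set α).indicator 1) t
        + 1 * eVariationOn ((upperClosure s : Set α).indicator 1) t :=
        eVariation_mul_le (fun x _ => hnorm _ x) (fun x _ => hnorm _ x)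
    _ ≤ 1 * ENNReal.ofReal (1 - 0) + 1 * ENNReal.ofReal (1 - 0) := by
        gcongr
        · exact eVariationOn_le_of_antitoneOn_of_mapsTo
            ((IsLowerSet.antitone_indicator_one (lowerClosure s).lower).antitoneOn t) (hmaps _)
        · exact eVariationOn_le_of_monotoneOn_of_mapsTo
            ((IsUpperSet.monotone_indicator_one (upperClosure s).upper).monotoneOn t) (hmaps _)
    _ = 2 := by norm_num

theorem integral_mem_Ico_of_pos {g : ℝ → ℝ} (hg : Continuous g) (hpos : ∀ t, 0 < g t)
    {a b x : ℝ} (hx : x ∈ Ico a b) : ∫ t in a..x, g t ∈ Ico 0 (∫ t in a..b, g t) := by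
  have hxb : 0 < ∫ t in x..b, g t :=
    intervalIntegral.intervalIntegral_pos_of_pos_on (hg.intervalIntegrable x b)
      (fun t _ => hpos t) hx.2
  rw [← intervalIntegral.integral_add_adjacent_intervals (hg.intervalIntegrable a x)
    (hg.intervalIntegrable x b)]
  exact ⟨intervalIntegral.integral_nonneg hx.1 fun t _ => (hpos t).le, by linarith⟩

theorem integral_cos_mul_eq_zero {c : ℝ} (hc : c ≠ 0) (hsin : sin c = 0) :
    ∫ x in (0:ℝ)..1, cos (c * x) = 0 := by
  rw [intervalIntegral.integral_comp_mul_left (fun x => cos x) hc, integral_cos]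
  simp [hsin]

namespace Gouezel

section Branches

variable {a : ℕ → ℝ}

theorem vd_eq (n : ℕ) (x : ℝ) : vd a n x = a n * (2 + cos (4 * π * n ^ 4 * x)) := by
  rw [vd, cos_sq]; ring_nf

theorem wd_eq (n : ℕ) (x : ℝ) : wd a n x = a n * (2 - cos (4 * π * n ^ 4 * x)) := by
  rw [wd, sin_sq, cos_sq]; ring_nf

theorem continuous_vd (n : ℕ) : Continuous (vd a n) := by
  unfold vd; fun_prop

theorem continuous_wd (n : ℕ) : Continuous (wd a n) := by
  unfold wd; fun_prop

theorem vd_pos {n : ℕ} (han : 0 < a n) (x : ℝ) : 0 < vd a n x := by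
  rw [vd_eq]; nlinarith [neg_one_le_cos (4 * π * n ^ 4 * x)]

theorem wd_pos {n : ℕ} (han : 0 < a n) (x : ℝ) : 0 < wd a n x := by
  rw [wd_eq]; nlinarith [cos_le_one (4 * π * n ^ 4 * x)]

theorem integral_cos_four_pi_mul_eq_zero {n : ℕ} (hn : n ≠ 0) :
    ∫ x in (0:ℝ)..1, cos (4 * π * n ^ 4 * x) = 0 := by
  refine integral_cos_mul_eq_zero (by positivity) ?_
  rw [show 4 * π * (n : ℝ) ^ 4 = ((4 * n ^ 4 : ℕ) : ℝ) * π by push_cast; ring]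
  exact sin_nat_mul_pi _

theorem integral_vd {n : ℕ} (hn : n ≠ 0) : ∫ x in (0:ℝ)..1, vd a n x = 2 * a n := by
  simp_rw [vd_eq]
  rw [intervalIntegral.integral_const_mul, intervalIntegral.integral_add,
    integral_cos_four_pi_mul_eq_zero hn]
  · simp only [intervalIntegral.integral_const, sub_zero, smul_eq_mul, one_mul, add_zero]
    ring
  all_goals exact Continuous.intervalIntegrable (by fun_prop) _ _

theorem integral_wd {n : ℕ} (hn : n ≠ 0) : ∫ x in (0:ℝ)..1, wd a n x = 2 * a n := by
  simp_rw [wd_eq]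
  rw [intervalIntegral.integral_const_mul, intervalIntegral.integral_sub,
    integral_cos_four_pi_mul_eq_zero hn]
  · simp only [intervalIntegral.integral_const, sub_zero, smul_eq_mul, one_mul]
    ring
  all_goals exact Continuous.intervalIntegrable (by fun_prop) _ _

theorem vd_div {n : ℕ} (hn : n ≠ 0) (i : ℕ) :
    vd a n (i / (4 * n ^ 4)) = a n * (2 + (-1) ^ i) := by
  rw [vd_eq, ← cos_nat_mul_pi]
  congr 3
  field_simp

theorem le_eVariationOn_smul_vd {n : ℕ} (hn : n ≠ 0) (han : 0 ≤ a n) {C : ℝ}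
    (hC : 0 ≤ C) :
    ENNReal.ofReal (4 * a n * n ^ 4 * C) ≤ eVariationOn (C • vd a n) (Ico 0 1) := by
  set P := 4 * n ^ 4 with hP
  have hP1 : 1 ≤ n ^ 4 := Nat.one_le_pow _ _ (Nat.pos_of_ne_zero hn)
  have hPpos : (0 : ℝ) < P := by positivity
  have hgrid : ∀ i ∈ Finset.Ico 0 (P - 1),
      edist ((C • vd a n) ((i + 1 : ℕ) / P)) ((C • vd a n) (i / P))
        = ENNReal.ofReal (2 * (a n * C)) := by
    intro i _
    simp only [Pi.smul_apply, smul_eq_mul, hP, Nat.cast_mul, Nat.cast_pow, Nat.cast_ofNat,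
      vd_div hn]
    rw [edist_dist, Real.dist_eq,
      show C * (a n * (2 + (-1) ^ (i + 1))) - C * (a n * (2 + (-1) ^ i))
        = -(2 * (a n * C) * (-1) ^ i) by ring,
      abs_neg, abs_mul, abs_neg_one_pow, mul_one, abs_of_nonneg (by positivity)]
  have hsum := eVariationOn.sum_le_of_monotoneOn_Icc (f := C • vd a n) (s := Ico 0 1)
    (m := 0) (n := P - 1) (u := fun i : ℕ => (i : ℝ) / P)
    (fun i _ j _ hij => div_le_div_of_nonneg_right (by exact_mod_cast hij) hPpos.le)
    (fun i hi => ⟨by positivity,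
      (div_lt_one hPpos).2 (by exact_mod_cast (hi.2.trans_lt (by omega)))⟩)
  rw [Finset.sum_congr rfl hgrid, Finset.sum_const, Nat.card_Ico, Nat.sub_zero, nsmul_eq_mul,
    ← ENNReal.ofReal_natCast, ← ENNReal.ofReal_mul (by positivity)] at hsum
  refine le_trans (ENNReal.ofReal_le_ofReal ?_) hsum
  rw [Nat.cast_sub (by omega), hP]
  push_cast
  have hn4 : (1 : ℝ) ≤ n ^ 4 := by exact_mod_cast hP1
  nlinarith [mul_nonneg (mul_nonneg han hC) (by linarith : (0 : ℝ) ≤ 4 * n ^ 4 - 2)]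

theorem ordConnected_iterate_u_image_v (a : ℕ → ℝ) (N q n : ℕ) :
    ((u a N 1)^[q] '' (v a n '' Ico 0 1)).OrdConnected := by
  have hv : Continuous (v a n) := continuous_const.add
    (intervalIntegral.continuous_primitive
      (fun _ _ => (continuous_vd n).intervalIntegrable _ _) 0)
  have hu : Continuous (u a N 1) := by unfold u; fun_prop
  rw [image_image]
  exact (isPreconnected_Ico.image _ ((hu.iterate q).comp hv).continuousOn).ordConnected

end Branches

section Transfer

variable {a : ℕ → ℝ} {N : ℕ}

theorem b_succ (a : ℕ → ℝ) (m : ℕ) : b a (m + 1) = b a m + 4 * a (m + 1) := by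
  simp only [b, Finset.sum_range_succ]; ring

theorem StdHyp.pos (ha : StdHyp a) (m : ℕ) : 0 < a (m + 1) := ha.1 _ m.succ_pos

theorem StdHyp.monotone_b (ha : StdHyp a) : Monotone (b a) :=
  monotone_nat_of_le_succ fun m => by rw [b_succ]; linarith [ha.pos m]

theorem StdHyp.b_nonneg (ha : StdHyp a) (m : ℕ) : 0 ≤ b a m := by
  simpa [b] using ha.monotone_b m.zero_le

theorem StdHyp.b_le_binf (ha : StdHyp a) (m : ℕ) : b a m ≤ binf a := by
  unfold b binf
  gcongr
  exact ha.2.1.sum_le_tsum _ fun k _ => (ha.pos k).le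

theorem StdHyp.binf_nonneg (ha : StdHyp a) : 0 ≤ binf a :=
  (ha.b_nonneg 0).trans (ha.b_le_binf 0)

theorem StdHyp.binf_lt_one (ha : StdHyp a) : binf a < 1 := by
  unfold binf; linarith [ha.2.2]

theorem StdHyp.lenJ_div_pos (ha : StdHyp a) (hN : 1 ≤ N) : 0 < lenJ a / N := by
  have : 0 < lenJ a := by unfold lenJ; linarith [ha.binf_lt_one]
  positivity

theorem StdHyp.v_mem_Ico (ha : StdHyp a) (m : ℕ) {x : ℝ} (hx : x ∈ Ico 0 1) :
    v a (m + 1) x ∈ Ico (b a m) (b a m + 2 * a (m + 1)) := by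
  have h := integral_mem_Ico_of_pos (continuous_vd (m + 1)) (vd_pos (ha.pos m)) hx
  rw [integral_vd m.succ_ne_zero] at h
  simp only [v, Nat.add_sub_cancel]
  exact ⟨by linarith [h.1], by linarith [h.2]⟩

theorem StdHyp.w_mem_Ico (ha : StdHyp a) (m : ℕ) {x : ℝ} (hx : x ∈ Ico 0 1) :
    w a (m + 1) x ∈ Ico (b a m + 2 * a (m + 1)) (b a (m + 1)) := by
  have h := integral_mem_Ico_of_pos (continuous_wd (m + 1)) (wd_pos (ha.pos m)) hx
  rw [integral_wd m.succ_ne_zero] at h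
  simp only [w, Nat.add_sub_cancel, b_succ]
  exact ⟨by linarith [h.1], by linarith [h.2]⟩

theorem StdHyp.v_w_mem_Ico (ha : StdHyp a) (m : ℕ) {x : ℝ} (hx : x ∈ Ico 0 1) :
    v a (m + 1) x ∈ Ico (b a m) (b a (m + 1)) ∧
      w a (m + 1) x ∈ Ico (b a m) (b a (m + 1)) := by
  have hv := ha.v_mem_Ico m hx
  have hw := ha.w_mem_Ico m hx
  have hb : b a m + 2 * a (m + 1) ≤ b a (m + 1) := by rw [b_succ]; linarith [ha.pos m]
  exact ⟨⟨hv.1, hv.2.trans_le hb⟩, ⟨by linarith [hw.1, ha.pos m], hw.2⟩⟩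

theorem StdHyp.Ico_b_subset (ha : StdHyp a) (m : ℕ) :
    Ico (b a m) (b a (m + 1)) ⊆ Ico 0 (binf a) :=
  Ico_subset_Ico (ha.b_nonneg m) (ha.b_le_binf (m + 1))

theorem StdHyp.v_w_mem_Ico_zero_one (ha : StdHyp a) (m : ℕ) {x : ℝ} (hx : x ∈ Ico 0 1) :
    v a (m + 1) x ∈ Ico 0 1 ∧ w a (m + 1) x ∈ Ico 0 1 :=
  have hI : Ico 0 (binf a) ⊆ Ico 0 1 := Ico_subset_Ico_right ha.binf_lt_one.le
  ⟨hI (ha.Ico_b_subset m (ha.v_w_mem_Ico m hx).1),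
    hI (ha.Ico_b_subset m (ha.v_w_mem_Ico m hx).2)⟩

theorem u_succ_eq (j : ℕ) (x : ℝ) :
    u a N (j + 1) x = binf a + (j + x) * (lenJ a / N) := by
  unfold u; push_cast; ring

theorem StdHyp.u_mem_Ico (ha : StdHyp a) (hN : 1 ≤ N) {j : ℕ} (hj : j < N) {x : ℝ}
    (hx : x ∈ Ico 0 1) : u a N (j + 1) x ∈ Ico (binf a + j * (lenJ a / N)) 1 := by
  have hc := ha.lenJ_div_pos hN
  have hjx : (j : ℝ) + x < N := by
    have : (j : ℝ) + 1 ≤ N := by exact_mod_cast hj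
    linarith [hx.2]
  have hNc : (N : ℝ) * (lenJ a / N) = 1 - binf a := by
    rw [mul_div_cancel₀ _ (by positivity), lenJ]
  rw [u_succ_eq]
  exact ⟨by nlinarith [hx.1], by nlinarith⟩

theorem StdHyp.u_one_image_subset (ha : StdHyp a) (hN : 1 ≤ N) {S : Set ℝ}
    (hS : S ⊆ Ico 0 1) : u a N 1 '' S ⊆ Ico (binf a) (binf a + lenJ a / N) := by
  rintro _ ⟨y, hy, rfl⟩
  have hc := ha.lenJ_div_pos hN
  have := u_succ_eq (a := a) (N := N) 0 y
  simp only [Nat.cast_zero, zero_add] at this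
  rw [this]
  exact ⟨by nlinarith [(hS hy).1], by nlinarith [(hS hy).2]⟩

theorem StdHyp.mapsTo_u_one (ha : StdHyp a) (hN : 1 ≤ N) :
    MapsTo (u a N 1) (Ico 0 1) (Ico 0 1) :=
  fun _ hx => Ico_subset_Ico_left (by simpa using ha.binf_nonneg) (ha.u_mem_Ico hN (j := 0) hN hx)

theorem StdHyp.injective_u_one (ha : StdHyp a) (hN : 1 ≤ N) :
    Function.Injective (u a N 1) := by
  intro x y h
  simpa [u, (ha.lenJ_div_pos hN).ne'] using h

theorem StdHyp.LR_congr (ha : StdHyp a) (hN : 1 ≤ N) {f g : ℝ → ℝ}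
    (hfg : EqOn f g (Ico 0 1)) : EqOn (LR a N f) (LR a N g) (Ico 0 1) := by
  intro x hx
  unfold LR
  congr 1
  · refine tsum_congr fun m => ?_
    rw [hfg (ha.v_w_mem_Ico_zero_one m hx).1, hfg (ha.v_w_mem_Ico_zero_one m hx).2]
  · refine congrArg _ (Finset.sum_congr rfl fun j hj => hfg ?_)
    have hu := ha.u_mem_Ico hN (Finset.mem_range.1 hj) hx
    have hc := ha.lenJ_div_pos hN
    exact ⟨ha.binf_nonneg.trans ((le_add_of_nonneg_right (by positivity)).trans hu.1), hu.2⟩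

theorem StdHyp.iterate_LR_congr (ha : StdHyp a) (hN : 1 ≤ N) {f g : ℝ → ℝ}
    (hfg : EqOn f g (Ico 0 1)) (j : ℕ) :
    EqOn ((LR a N)^[j] f) ((LR a N)^[j] g) (Ico 0 1) := by
  induction j with
  | zero => exact hfg
  | succ j ih =>
    simp only [Function.iterate_succ_apply']
    exact ha.LR_congr hN ih

theorem LR_smul (a : ℕ → ℝ) (N : ℕ) (r : ℝ) (f : ℝ → ℝ) :
    LR a N (r • f) = r • LR a N f := by
  ext x
  simp only [LR, Pi.smul_apply, smul_eq_mul, mul_add, Finset.mul_sum, ← tsum_mul_left]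
  congr 1
  · exact tsum_congr fun m => by ring
  · exact Finset.sum_congr rfl fun j _ => by ring

theorem iterate_LR_smul (a : ℕ → ℝ) (N : ℕ) (r : ℝ) (f : ℝ → ℝ) (j : ℕ) :
    (LR a N)^[j] (r • f) = r • (LR a N)^[j] f :=
  (Function.Commute.iterate_left (fun g => LR_smul a N r g) j) f

theorem StdHyp.LR_indicator_v_image (ha : StdHyp a) (hN : 1 ≤ N) (p : ℕ) :
    EqOn (LR a N ((v a (p + 1) '' Ico 0 1).indicator fun _ => 1)) (vd a (p + 1)) (Ico 0 1) := by
  intro x hx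
  set χ := (v a (p + 1) '' Ico 0 1).indicator fun _ => (1 : ℝ)
  have hχ : ∀ y ∉ Ico (b a p) (b a p + 2 * a (p + 1)), χ y = 0 := fun y hy =>
    indicator_of_notMem (by rintro ⟨z, hz, rfl⟩; exact hy (ha.v_mem_Ico p hz)) _
  have hsum : ∑ j ∈ Finset.range N, χ (u a N (j + 1) x) = 0 := by
    refine Finset.sum_eq_zero fun j hj => hχ _ fun hmem => ?_
    have hu := (ha.u_mem_Ico hN (Finset.mem_range.1 hj) hx).1
    have hc := ha.lenJ_div_pos hN
    have hb : b a p + 2 * a (p + 1) ≤ binf a := by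
      linarith [ha.b_le_binf (p + 1), b_succ a p, ha.pos p]
    nlinarith [hmem.2]
  have hterm : ∀ m ≠ p,
      vd a (m + 1) x * χ (v a (m + 1) x) + wd a (m + 1) x * χ (w a (m + 1) x) = 0 := by
    intro m hm
    have hdisj : Disjoint (Ico (b a m) (b a (m + 1))) (Ico (b a p) (b a (p + 1))) :=
      ha.monotone_b.pairwise_disjoint_on_Ico_succ hm
    have hout : ∀ y ∈ Ico (b a m) (b a (m + 1)), χ y = 0 := fun y hy =>
      hχ y fun hy' => disjoint_left.1 hdisj hy
        ⟨hy'.1, hy'.2.trans_le (by linarith [b_succ a p, ha.pos p])⟩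
    rw [hout _ (ha.v_w_mem_Ico m hx).1, hout _ (ha.v_w_mem_Ico m hx).2]
    ring
  have hv : χ (v a (p + 1) x) = 1 := indicator_of_mem (mem_image_of_mem _ hx) _
  have hw : χ (w a (p + 1) x) = 0 := hχ _ fun h => (ha.w_mem_Ico p hx).1.not_gt h.2
  rw [LR, hsum, tsum_eq_single p hterm, hv, hw]
  ring

theorem StdHyp.LR_indicator_u_one_image (ha : StdHyp a) (hN : 1 ≤ N) {S : Set ℝ}
    (hS : S ⊆ Ico 0 1) :
    EqOn (LR a N ((u a N 1 '' S).indicator fun _ => 1)) ((lenJ a / N) • S.indicator fun _ => 1)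
      (Ico 0 1) := by
  intro x hx
  set χ := (u a N 1 '' S).indicator fun _ => (1 : ℝ)
  have hχ : ∀ y ∉ Ico (binf a) (binf a + lenJ a / N), χ y = 0 := fun y hy =>
    indicator_of_notMem (fun h => hy (ha.u_one_image_subset hN hS h)) _
  have htsum : ∀ m,
      vd a (m + 1) x * χ (v a (m + 1) x) + wd a (m + 1) x * χ (w a (m + 1) x) = 0 := by
    intro m
    have hlt : ∀ y ∈ Ico (b a m) (b a (m + 1)), χ y = 0 := fun y hy =>
      hχ y fun h => (ha.Ico_b_subset m hy).2.not_ge h.1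
    rw [hlt _ (ha.v_w_mem_Ico m hx).1, hlt _ (ha.v_w_mem_Ico m hx).2]
    ring
  have hterm : ∀ j ∈ Finset.range N, j ≠ 0 → χ (u a N (j + 1) x) = 0 := by
    intro j hj hj0
    refine hχ _ fun h => ?_
    have hu := (ha.u_mem_Ico hN (Finset.mem_range.1 hj) hx).1
    have hj1 : (1 : ℝ) ≤ j := by exact_mod_cast Nat.one_le_iff_ne_zero.2 hj0
    nlinarith [h.2, ha.lenJ_div_pos hN]
  have h0 : χ (u a N 1 x) = S.indicator (fun _ => 1) x := by
    by_cases hxS : x ∈ S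
    · simp [χ, hxS, mem_image_of_mem _ hxS]
    · simp [χ, hxS, (ha.injective_u_one hN).mem_set_image]
  simp only [LR, htsum, tsum_zero, zero_add, Pi.smul_apply, smul_eq_mul]
  rw [Finset.sum_eq_single_of_mem 0 (Finset.mem_range.2 hN) hterm, zero_add, h0]

theorem StdHyp.iterate_LR_indicator_iterate_u_one_image (ha : StdHyp a) (hN : 1 ≤ N)
    {S : Set ℝ} (hS : S ⊆ Ico 0 1) (j : ℕ) :
    EqOn ((LR a N)^[j] (((u a N 1)^[j] '' S).indicator fun _ => 1))
      ((lenJ a / N) ^ j • S.indicator fun _ => 1) (Ico 0 1) := by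
  induction j with
  | zero => simp [EqOn]
  | succ j ih =>
    intro x hx
    have hSj : (u a N 1)^[j] '' S ⊆ Ico 0 1 :=
      (image_mono hS).trans ((ha.mapsTo_u_one hN).iterate j).image_subset
    calc (LR a N)^[j + 1] (((u a N 1)^[j + 1] '' S).indicator fun _ => 1) x
        = (LR a N)^[j]
            (LR a N ((u a N 1 '' ((u a N 1)^[j] '' S)).indicator fun _ => 1)) x := by
          rw [Function.iterate_succ_apply, Function.iterate_succ', image_comp]
      _ = (LR a N)^[j] ((lenJ a / N) • ((u a N 1)^[j] '' S).indicator fun _ => 1) x :=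
          ha.iterate_LR_congr hN (ha.LR_indicator_u_one_image hN hSj) j hx
      _ = ((lenJ a / N) ^ (j + 1) • S.indicator fun _ => 1) x := by
          simp only [iterate_LR_smul, Pi.smul_apply, ih hx, smul_eq_mul, pow_succ]
          ring

end Transfer

/-- with `χ_n` the characteristic function of `u_1^{k-1}(v_n([0,1)))`,
`Var(L^k χ_n) ≥ 4 a_n n⁴ (|J|/N)^{k-1}`, while `Var(χ_n) ≤ 2` and `sup|χ_n| ≤ 1`. -/
theorem stmt4 (a : ℕ → ℝ) (N : ℕ) (hN : 1 ≤ N) (ha : StdHyp a)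
    (k n : ℕ) (hk : 1 ≤ k) (hn : 1 ≤ n) :
    ENNReal.ofReal (4 * a n * (n : ℝ) ^ 4 * (lenJ a / N) ^ (k - 1)) ≤
      eVariationOn
        ((LR a N)^[k]
          (Set.indicator ((u a N 1)^[k - 1] '' (v a n '' Ico (0:ℝ) 1)) fun _ => (1:ℝ)))
        (Ico (0:ℝ) 1) ∧
    eVariationOn
        (Set.indicator ((u a N 1)^[k - 1] '' (v a n '' Ico (0:ℝ) 1)) fun _ => (1:ℝ))
        (Ico (0:ℝ) 1) ≤ 2 ∧
    ∀ x ∈ Ico (0:ℝ) 1,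
      |Set.indicator ((u a N 1)^[k - 1] '' (v a n '' Ico (0:ℝ) 1)) (fun _ => (1:ℝ)) x|
        ≤ 1 := by
  obtain ⟨q, rfl⟩ := Nat.exists_eq_add_of_le' hk
  obtain ⟨p, rfl⟩ := Nat.exists_eq_add_of_le' hn
  rw [Nat.add_sub_cancel]
  set V := v a (p + 1) '' Ico 0 1
  refine ⟨?_, (ordConnected_iterate_u_image_v a N q (p + 1)).eVariationOn_indicator_one_le_two _,
    fun x _ => by by_cases hx : x ∈ (u a N 1)^[q] '' V <;> simp [hx]⟩
  have hV : V ⊆ Ico 0 1 := image_subset_iff.2 fun x hx => (ha.v_w_mem_Ico_zero_one p hx).1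
  have hLk : EqOn ((LR a N)^[q + 1] (((u a N 1)^[q] '' V).indicator fun _ => 1))
      ((lenJ a / N) ^ q • vd a (p + 1)) (Ico 0 1) := by
    intro x hx
    rw [Function.iterate_succ_apply', ha.LR_congr hN
      (ha.iterate_LR_indicator_iterate_u_one_image hN hV q) hx, LR_smul, Pi.smul_apply,
      ha.LR_indicator_v_image hN p hx, Pi.smul_apply]
  rw [eVariationOn.eq_of_eqOn hLk]
  exact le_eVariationOn_smul_vd p.succ_ne_zero (ha.pos p).le
    (pow_nonneg (ha.lenJ_div_pos hN).le q)

end Gouezel
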